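/- arXiv:2109.13295 — 8 statements merged into one kernel-verified Lean document; each statement's English description precedes it below -/
import Mathlib

section
/- Let λ > 0 and let G : ℝ → ℝ be measurable with 0 ≤ G(t) ≤ 1 for all t ≥ 0, M(t) = ∫₀ᵗ (1 − G(v)) dv, α = ∫₀^∞ (1 − G(v)) dv finite, ρ = λα, D(s) = ∫₀^∞ e^{−st − λM(t)} dt, and let the M|G|∞ busy period Laplace transform be B̄(s) = 1 + λ⁻¹ (s − 1/D(s)). Then lim_{s → 0⁺} (1 − B̄(s))/s = (e^{ρ} − 1)/λ; that is, the mean busy period length is E[B] = (e^{ρ} − 1)/λ for any service time distribution. -/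
open MeasureTheory Real Filter Set

/-- The mean M|G|∞ busy period length is `(e^ρ − 1)/λ` for any service time
distribution: `(1 − B̄(s))/s → (e^ρ − 1)/λ` as `s → 0⁺`. -/
theorem mginf_mean_busy_period
    (lam : ℝ) (hlam : 0 < lam) (G : ℝ → ℝ) (hGmeas : Measurable G)
    (hG : ∀ t ≥ (0:ℝ), 0 ≤ G t ∧ G t ≤ 1)
    (M : ℝ → ℝ) (hM : ∀ t, M t = ∫ v in (0:ℝ)..t, (1 - G v))
    (hint : IntegrableOn (fun v => 1 - G v) (Ioi 0))
    (α ρ : ℝ) (hα : α = ∫ v in Ioi (0:ℝ), (1 - G v)) (hρ : ρ = lam * α)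
    (D Bbar : ℝ → ℝ)
    (hD : ∀ s, D s = ∫ t in Ioi (0:ℝ), exp (-s * t - lam * M t))
    (hBbar : ∀ s, Bbar s = 1 + lam⁻¹ * (s - 1 / D s)) :
    Tendsto (fun s : ℝ => (1 - Bbar s) / s)
      (nhdsWithin 0 (Ioi 0)) (nhds ((exp ρ - 1) / lam)) := by
  -- a monotone (hence measurable) version of M
  set N : ℝ → ℝ := fun t => ∫ v in Ioc (0:ℝ) t, (1 - G v) with hNdef
  have hNmono : Monotone N := by
    intro t₁ t₂ h
    apply setIntegral_mono_set (hint.mono_set Ioc_subset_Ioi_self)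
    · refine (ae_restrict_iff' measurableSet_Ioc).2 (ae_of_all _ fun v hv => ?_)
      exact sub_nonneg.2 (hG v hv.1.le).2
    · exact (Ioc_subset_Ioc_right h).eventuallyLE
  have hNmeas : Measurable N := hNmono.measurable
  have hMN : ∀ t : ℝ, 0 < t → M t = N t := by
    intro t ht
    rw [hM, intervalIntegral.integral_of_le ht.le]
  have hMnonneg : ∀ t : ℝ, 0 < t → 0 ≤ M t := by
    intro t ht
    rw [hM]
    apply intervalIntegral.integral_nonneg ht.le
    intro v hv
    exact sub_nonneg.2 (hG v hv.1).2
  -- M tends to α at infinity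
  have hMlim : Tendsto M atTop (nhds α) := by
    have h := intervalIntegral_tendsto_integral_Ioi 0 hint tendsto_id
    rw [← hα] at h
    exact h.congr fun t => (hM t).symm
  -- the rescaled representation of s * D s
  have hrep : ∀ s : ℝ, 0 < s →
      s * D s = ∫ u in Ioi (0:ℝ), exp (-u - lam * M (u / s)) := by
    intro s hs
    have h := integral_comp_mul_left_Ioi (fun x => exp (-x - lam * M (x / s))) 0 hs
    simp only [mul_zero] at h
    have h2 : (∫ x in Ioi (0:ℝ), exp (-(s * x) - lam * M (s * x / s))) = D s := by
      rw [hD]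
      congr 1 with t
      rw [mul_div_cancel_left₀ _ hs.ne', neg_mul]
    rw [h2] at h
    rw [h, smul_eq_mul]
    field_simp
  -- dominated convergence
  have hSD0 : Tendsto (fun s : ℝ => ∫ u in Ioi (0:ℝ), exp (-u - lam * M (u / s)))
      (nhdsWithin 0 (Ioi 0)) (nhds (∫ u in Ioi (0:ℝ), exp (-u - ρ))) := by
    apply tendsto_integral_filter_of_dominated_convergence (fun u => exp (-u))
    · filter_upwards [self_mem_nhdsWithin] with s hs
      have hmeas : Measurable fun u : ℝ => exp (-u - lam * N (u / s)) := by
        exact (((measurable_id.neg).sub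
          ((hNmeas.comp (measurable_id.div_const s)).const_mul lam)).exp)
      refine hmeas.aestronglyMeasurable.congr ?_
      filter_upwards [self_mem_ae_restrict measurableSet_Ioi] with u hu
      rw [hMN (u / s) (div_pos hu hs)]
    · filter_upwards [self_mem_nhdsWithin] with s hs
      filter_upwards [self_mem_ae_restrict measurableSet_Ioi] with u hu
      rw [Real.norm_eq_abs, abs_exp]
      apply exp_le_exp.2
      have h0 := hMnonneg (u / s) (div_pos hu hs)
      nlinarith [mul_nonneg hlam.le h0]
    · exact (exp_neg_integrableOn_Ioi 0 one_pos).congr_fun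
        (fun x _ => by simp only [neg_one_mul]) measurableSet_Ioi
    · filter_upwards [self_mem_ae_restrict measurableSet_Ioi] with u hu
      have h1 : Tendsto (fun s : ℝ => u / s) (nhdsWithin 0 (Ioi 0)) atTop := by
        simp only [div_eq_mul_inv]
        exact tendsto_inv_nhdsGT_zero.const_mul_atTop hu
      have h2 : Tendsto (fun s : ℝ => M (u / s)) (nhdsWithin 0 (Ioi 0)) (nhds α) :=
        hMlim.comp h1
      have h3 : Tendsto (fun s : ℝ => exp (-u - lam * M (u / s)))
          (nhdsWithin 0 (Ioi 0)) (nhds (exp (-u - lam * α))) :=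
        (Real.continuous_exp.tendsto _).comp
          ((tendsto_const_nhds.sub (h2.const_mul lam)))
      rwa [hρ]
  have hIval : (∫ u in Ioi (0:ℝ), exp (-u - ρ)) = exp (-ρ) := by
    have : ∀ u : ℝ, exp (-u - ρ) = exp (-ρ) * exp (-u) := by
      intro u; rw [← exp_add]; ring_nf
    simp_rw [this, integral_const_mul, integral_exp_neg_Ioi_zero, mul_one]
  have hSD : Tendsto (fun s : ℝ => s * D s) (nhdsWithin 0 (Ioi 0)) (nhds (exp (-ρ))) := by
    rw [← hIval]
    refine hSD0.congr' ?_
    filter_upwards [self_mem_nhdsWithin] with s hs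
    exact (hrep s hs).symm
  -- eventually D s > 0
  have hpos : ∀ᶠ s in nhdsWithin (0:ℝ) (Ioi 0), 0 < s * D s :=
    hSD.eventually (eventually_gt_nhds (exp_pos (-ρ)))
  -- final computation
  have hfin : Tendsto (fun s : ℝ => lam⁻¹ * (1 / (s * D s) - 1))
      (nhdsWithin 0 (Ioi 0)) (nhds ((exp ρ - 1) / lam)) := by
    have h4 : Tendsto (fun s : ℝ => 1 / (s * D s)) (nhdsWithin 0 (Ioi 0))
        (nhds (1 / exp (-ρ))) := by
      simp only [one_div]
      exact hSD.inv₀ (exp_ne_zero _)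
    have h5 := (h4.sub_const 1).const_mul lam⁻¹
    have : lam⁻¹ * (1 / exp (-ρ) - 1) = (exp ρ - 1) / lam := by
      rw [one_div, exp_neg, inv_inv]
      field_simp
    rwa [this] at h5
  refine hfin.congr' ?_
  filter_upwards [self_mem_nhdsWithin, hpos] with s hs hDpos
  have hsne : s ≠ 0 := ne_of_gt hs
  have hDne : D s ≠ 0 := by
    intro h; rw [h, mul_zero] at hDpos; exact lt_irrefl 0 hDpos
  rw [hBbar, eq_div_iff hsne]
  field_simp
  ring
end

section
/- Let λ > 0, ρ > 0, −λ < β ≤ λ/(e^{ρ} − 1), and let G_β(t) = 1 − (1 − e^{−ρ})(λ+β)/(λ e^{−ρ}(e^{(λ+β)t} − 1) + λ) for t ≥ 0. Then for every t ≥ 0, exp(−λ ∫₀ᵗ (1 − G_β(v)) dv) = e^{−ρ} + (1 − e^{−ρ}) e^{−(λ+β)t}. -/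
open MeasureTheory Real Filter Set

/-- For the constant-β service family `G_β`, the busy period transform kernel is
`e^{−λ∫₀ᵗ(1−G_β)} = e^{−ρ} + (1 − e^{−ρ}) e^{−(λ+β)t}`. -/
theorem mginf_constant_beta_kernel
    (lam ρ β : ℝ) (hlam : 0 < lam) (hρ : 0 < ρ)
    (hβ1 : -lam < β) (hβ2 : β ≤ lam / (exp ρ - 1))
    (Gβ : ℝ → ℝ)
    (hGβ : ∀ t, Gβ t = 1 - ((1 - exp (-ρ)) * (lam + β)) /
        (lam * exp (-ρ) * (exp ((lam + β) * t) - 1) + lam)) :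
    ∀ t ≥ (0:ℝ),
      exp (-(lam * ∫ v in (0:ℝ)..t, (1 - Gβ v)))
        = exp (-ρ) + (1 - exp (-ρ)) * exp (-(lam + β) * t) := by
  intro t ht
  set a := lam + β with ha
  set c := Real.exp (-ρ) with hc
  clear_value a c
  have hc0 : 0 < c := by rw [hc]; exact Real.exp_pos _
  have hc1 : c < 1 := by
    rw [hc, ← Real.exp_zero]
    exact Real.exp_lt_exp.mpr (by linarith)
  have ha0 : 0 < a := by rw [ha]; linarith
  have hg : ∀ v : ℝ, 0 < c + (1 - c) * Real.exp (-a * v) := by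
    intro v
    have := Real.exp_pos (-a * v)
    nlinarith
  have hD : ∀ v : ℝ, 0 < lam * c * (Real.exp (a * v) - 1) + lam := by
    intro v
    have h1 := Real.exp_pos (a * v)
    nlinarith [mul_pos (mul_pos hlam hc0) h1]
  have hderiv : ∀ v : ℝ, HasDerivAt
      (fun v => -Real.log (c + (1 - c) * Real.exp (-a * v)))
      (lam * (1 - Gβ v)) v := by
    intro v
    have h1 : HasDerivAt (fun v : ℝ => -a * v) (-a) v := by
      simpa using (hasDerivAt_id v).const_mul (-a)
    have h2 : HasDerivAt (fun v : ℝ => c + (1 - c) * Real.exp (-a * v))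
        ((1 - c) * (Real.exp (-a * v) * (-a))) v := by
      exact ((h1.exp).const_mul (1 - c)).const_add c
    have h3 := (h2.log (hg v).ne').neg
    convert h3 using 1
    case e'_4 => rfl
    case e'_5 => rfl
    case e'_8 => funext y; rfl
    have hE : Real.exp (a * v) = (Real.exp (-a * v))⁻¹ := by
      rw [← Real.exp_neg, neg_mul, neg_neg]
    have hDv' := (hD v).ne'
    rw [hE] at hDv'
    have hgv' := (hg v).ne'
    rw [hGβ v, hE]
    have hq : c - c * Real.exp (-(a * v)) + Real.exp (-(a * v)) ≠ 0 := by
      have h6 := hg v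
      rw [neg_mul] at h6
      intro h; nlinarith
    field_simp [hq]
    have hq2 : lam * c * (1 - Real.exp (-(a * v))) + lam * Real.exp (-(a * v)) ≠ 0 := by
      rw [show lam * c * (1 - Real.exp (-(a * v))) + lam * Real.exp (-(a * v))
          = lam * (c - c * Real.exp (-(a * v)) + Real.exp (-(a * v))) from by ring]
      exact mul_ne_zero hlam.ne' hq
    have hq3 : c + (1 - c) * Real.exp (-(a * v)) ≠ 0 := by
      rw [show c + (1 - c) * Real.exp (-(a * v))
          = c - c * Real.exp (-(a * v)) + Real.exp (-(a * v)) from by ring]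
      exact hq
    rw [show c * (1 - Real.exp (-(a * v))) + Real.exp (-(a * v))
        = c + (1 - c) * Real.exp (-(a * v)) from by ring]
    ring
  have hcont : Continuous (fun v => lam * (1 - Gβ v)) := by
    have : (fun v => lam * (1 - Gβ v)) =
        (fun v => lam * (((1 - c) * a) /
          (lam * c * (Real.exp (a * v) - 1) + lam))) := by
      funext v; rw [hGβ v]; ring_nf
    rw [this]
    exact continuous_const.mul (continuous_const.div
      (by continuity) (fun v => (hD v).ne'))
  have hint : IntervalIntegrable (fun v => lam * (1 - Gβ v)) volume 0 t :=
    hcont.intervalIntegrable 0 t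
  have key : ∫ v in (0:ℝ)..t, lam * (1 - Gβ v) =
      (-Real.log (c + (1 - c) * Real.exp (-a * t))) -
      (-Real.log (c + (1 - c) * Real.exp (-a * 0))) :=
    intervalIntegral.integral_eq_sub_of_hasDerivAt (fun v _ => hderiv v) hint
  have h0 : c + (1 - c) * Real.exp (-a * 0) = 1 := by simp
  rw [h0, Real.log_one] at key
  have hmul : lam * ∫ v in (0:ℝ)..t, (1 - Gβ v) =
      ∫ v in (0:ℝ)..t, lam * (1 - Gβ v) := by
    rw [intervalIntegral.integral_const_mul]
  rw [hmul, key]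
  rw [neg_zero, sub_zero, neg_neg, Real.exp_log (hg t)]
end

section
/- Let λ > 0, ρ > 0 and −λ < β ≤ λ/(e^{ρ} − 1). Then G_β(t) = 1 − (1 − e^{−ρ})(λ+β)/(λ e^{−ρ}(e^{(λ+β)t} − 1) + λ) defines a distribution function on [0, ∞): G_β is nondecreasing on [0, ∞), G_β(0) = 1 − (λ+β)(1 − e^{−ρ})/λ satisfies 0 ≤ G_β(0) ≤ 1, and G_β(t) → 1 as t → ∞. -/
open MeasureTheory Real Filter Set

/-- `G_β` is a distribution function on `[0,∞)`: nondecreasing on `[0,∞)`,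
`G_β(0) = 1 − (λ+β)(1 − e^{−ρ})/λ ∈ [0,1]`, and `G_β(t) → 1` as `t → ∞`. -/
theorem mginf_constant_beta_is_df
    (lam ρ β : ℝ) (hlam : 0 < lam) (hρ : 0 < ρ)
    (hβ1 : -lam < β) (hβ2 : β ≤ lam / (exp ρ - 1))
    (Gβ : ℝ → ℝ)
    (hGβ : ∀ t, Gβ t = 1 - ((1 - exp (-ρ)) * (lam + β)) /
        (lam * exp (-ρ) * (exp ((lam + β) * t) - 1) + lam)) :
    MonotoneOn Gβ (Ici 0) ∧
    Gβ 0 = 1 - (lam + β) * (1 - exp (-ρ)) / lam ∧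
    0 ≤ Gβ 0 ∧ Gβ 0 ≤ 1 ∧
    Tendsto Gβ atTop (nhds 1) := by
  have ha : 0 < lam + β := by linarith
  have hc : 0 < 1 - exp (-ρ) := by
    have : exp (-ρ) < 1 := exp_lt_one_iff.mpr (by linarith)
    linarith
  have hN : 0 ≤ (1 - exp (-ρ)) * (lam + β) := le_of_lt (mul_pos hc ha)
  have hepos : 0 < exp (-ρ) := exp_pos _
  have hD : ∀ t : ℝ, 0 ≤ t → 0 < lam * exp (-ρ) * (exp ((lam + β) * t) - 1) + lam := by
    intro t ht
    have h1 : (1:ℝ) ≤ exp ((lam + β) * t) := one_le_exp (by positivity)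
    have h2 : 0 ≤ lam * exp (-ρ) * (exp ((lam + β) * t) - 1) := by
      apply mul_nonneg (by positivity); linarith
    linarith
  have hmono : MonotoneOn Gβ (Ici 0) := by
    intro s hs t ht hst
    rw [hGβ, hGβ]
    have hds : 0 < lam * exp (-ρ) * (exp ((lam + β) * s) - 1) + lam := hD s hs
    have hle : lam * exp (-ρ) * (exp ((lam + β) * s) - 1) + lam ≤
        lam * exp (-ρ) * (exp ((lam + β) * t) - 1) + lam := by
      have := exp_le_exp.mpr (mul_le_mul_of_nonneg_left hst (le_of_lt ha))
      nlinarith [mul_pos hlam hepos]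
    have := div_le_div_of_nonneg_left hN hds hle
    linarith
  have hG0 : Gβ 0 = 1 - (lam + β) * (1 - exp (-ρ)) / lam := by
    rw [hGβ]; rw [mul_zero, exp_zero]; ring_nf
  have key : (lam + β) * (1 - exp (-ρ)) ≤ lam := by
    have heρ : 0 < exp ρ - 1 := by
      have : (1:ℝ) < exp ρ := by
        rw [← exp_zero]; exact exp_lt_exp.mpr hρ
      linarith
    have hβ2' : β * (exp ρ - 1) ≤ lam := (le_div_iff₀ heρ).mp hβ2
    have hrel : exp (-ρ) * exp ρ = 1 := by
      rw [← exp_add]; simp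
    nlinarith [exp_pos ρ]
  refine ⟨hmono, hG0, ?_, ?_, ?_⟩
  · rw [hG0]
    have : (lam + β) * (1 - exp (-ρ)) / lam ≤ 1 := by
      rw [div_le_one hlam]; exact key
    linarith
  · rw [hG0]
    have : 0 ≤ (lam + β) * (1 - exp (-ρ)) / lam := by positivity
    linarith
  · have hfun : Gβ = fun t => 1 - ((1 - exp (-ρ)) * (lam + β)) /
        (lam * exp (-ρ) * (exp ((lam + β) * t) - 1) + lam) := funext hGβ
    rw [hfun]
    have hDtop : Tendsto (fun t => lam * exp (-ρ) * (exp ((lam + β) * t) - 1) + lam)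
        atTop atTop := by
      apply tendsto_atTop_add_const_right
      apply Tendsto.const_mul_atTop (by positivity)
      apply tendsto_atTop_add_const_right
      exact tendsto_exp_atTop.comp (tendsto_id.const_mul_atTop ha)
    have h0 : Tendsto (fun t => ((1 - exp (-ρ)) * (lam + β)) /
        (lam * exp (-ρ) * (exp ((lam + β) * t) - 1) + lam)) atTop (nhds 0) :=
      tendsto_const_nhds.div_atTop hDtop
    have := tendsto_const_nhds (α := ℝ) (x := (1:ℝ)) (f := atTop) |>.sub h0
    simpa using this
end

section
/- Let λ > 0, ρ > 0 and −λ < β ≤ λ/(e^{ρ} − 1), and let G_β(t) = 1 − (1 − e^{−ρ})(λ+β)/(λ e^{−ρ}(e^{(λ+β)t} − 1) + λ) for t ≥ 0. Then the mean service time is ∫₀^∞ (1 − G_β(t)) dt = ρ/λ; that is, every member of the constant-β family has traffic intensity exactly ρ. -/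
open MeasureTheory Real Filter Set Topology

/-- Every member of the constant-β family has mean service time `ρ/λ`,
i.e. traffic intensity exactly `ρ`. -/
theorem mginf_constant_beta_mean_service
    (lam ρ β : ℝ) (hlam : 0 < lam) (hρ : 0 < ρ)
    (hβ1 : -lam < β) (hβ2 : β ≤ lam / (exp ρ - 1))
    (Gβ : ℝ → ℝ)
    (hGβ : ∀ t, Gβ t = 1 - ((1 - exp (-ρ)) * (lam + β)) /
        (lam * exp (-ρ) * (exp ((lam + β) * t) - 1) + lam)) :
    (∫ t in Ioi (0:ℝ), (1 - Gβ t)) = ρ / lam := by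
  set a := lam + β with ha
  set c := lam * exp (-ρ) with hc
  set d := lam * (1 - exp (-ρ)) with hd
  have hapos : 0 < a := by linarith
  have hcpos : 0 < c := mul_pos hlam (exp_pos _)
  have hdpos : 0 < d := by
    have : exp (-ρ) < 1 := exp_lt_one_iff.mpr (by linarith)
    exact mul_pos hlam (by linarith)
  have hcd : c + d = lam := by rw [hc, hd]; ring
  -- denominator positivity
  have hden : ∀ t : ℝ, 0 < c * exp (a * t) + d :=
    fun t => add_pos (mul_pos hcpos (exp_pos _)) hdpos
  -- rewrite integrand
  have hint : ∀ t : ℝ, 1 - Gβ t = (d / lam) * a / (c * exp (a * t) + d) := by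
    intro t
    rw [hGβ t]
    have : lam * exp (-ρ) * (exp ((lam + β) * t) - 1) + lam
        = c * exp (a * t) + d := by rw [hc, hd, ha]; ring
    rw [this]
    rw [hd]
    field_simp
    ring
  set F : ℝ → ℝ := fun t => (a * t - log (c * exp (a * t) + d)) / lam with hF
  have hderiv : ∀ t : ℝ, HasDerivAt F ((d / lam) * a / (c * exp (a * t) + d)) t := by
    intro t
    have h1 : HasDerivAt (fun t : ℝ => a * t) a t := by
      simpa using (hasDerivAt_id t).const_mul a
    have h2 : HasDerivAt (fun t : ℝ => c * exp (a * t) + d)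
        (c * (exp (a * t) * a)) t := ((h1.exp).const_mul c).add_const d
    have h3 : HasDerivAt (fun t : ℝ => log (c * exp (a * t) + d))
        (c * (exp (a * t) * a) / (c * exp (a * t) + d)) t :=
      h2.log (hden t).ne'
    have h4 : HasDerivAt (fun x : ℝ => (a * x - log (c * exp (a * x) + d)) / lam)
        ((a - c * (exp (a * t) * a) / (c * exp (a * t) + d)) / lam) t :=
      (h1.sub h3).div_const lam
    convert h4 using 1
    have hD := (hden t).ne'
    have hL := hlam.ne'
    field_simp
    ring
  -- alternative form of F
  have hF2 : ∀ t : ℝ, F t = - log (c + d * exp (-(a * t))) / lam := by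
    intro t
    have hx : c * exp (a * t) + d = exp (a * t) * (c + d * exp (-(a * t))) := by
      rw [exp_neg]
      field_simp
    have hpos : 0 < c + d * exp (-(a * t)) :=
      add_pos hcpos (mul_pos hdpos (exp_pos _))
    show (a * t - log (c * exp (a * t) + d)) / lam = _
    rw [hx, log_mul (exp_ne_zero _) hpos.ne', log_exp]
    ring
  have hlim : Tendsto F atTop (𝓝 (- log c / lam)) := by
    have h1 : Tendsto (fun t : ℝ => -(a * t)) atTop atBot := by
      apply tendsto_neg_atBot_iff.mpr
      exact (tendsto_const_mul_atTop_of_pos hapos).mpr tendsto_id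
    have h2 : Tendsto (fun t : ℝ => c + d * exp (-(a * t))) atTop (𝓝 (c + d * 0)) :=
      tendsto_const_nhds.add (tendsto_const_nhds.mul (tendsto_exp_atBot.comp h1))
    rw [mul_zero, add_zero] at h2
    have h3 : Tendsto (fun t : ℝ => - log (c + d * exp (-(a * t))) / lam) atTop
        (𝓝 (- log c / lam)) :=
      (((Real.continuousAt_log hcpos.ne').tendsto.comp h2).neg).div_const lam
    exact h3.congr (fun t => (hF2 t).symm)
  have key := integral_Ioi_of_hasDerivAt_of_nonneg' (g := F)
      (g' := fun t => (d / lam) * a / (c * exp (a * t) + d)) (a := 0)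
      (fun x _ => hderiv x)
      (fun x _ => le_of_lt (div_pos (mul_pos (div_pos hdpos hlam) hapos) (hden x)))
      hlim
  calc (∫ t in Ioi (0:ℝ), (1 - Gβ t))
      = ∫ t in Ioi (0:ℝ), (d / lam) * a / (c * exp (a * t) + d) := by
        simp_rw [hint]
    _ = - log c / lam - F 0 := key
    _ = ρ / lam := by
        simp only [hF, mul_zero, exp_zero, mul_one, zero_sub, hcd]
        rw [hc, log_mul hlam.ne' (exp_pos _).ne', log_exp]
        ring
end

section
/- Let λ > 0, ρ > 0, −λ < β ≤ λ/(e^{ρ} − 1), G_β(t) = 1 − (1 − e^{−ρ})(λ+β)/(λ e^{−ρ}(e^{(λ+β)t} − 1) + λ), M(t) = ∫₀ᵗ (1 − G_β(v)) dv, D(s) = ∫₀^∞ e^{−st − λM(t)} dt, c = (λ+β)(1 − e^{−ρ})/λ and μ = e^{−ρ}(λ+β). Then for every s > 0 the M|G|∞ busy period Laplace transform satisfies B̄(s) = 1 + λ⁻¹(s − 1/D(s)) = 1 − c·s/(s + μ), which is the Laplace–Stieltjes transform of the distribution function B^β(t) = 1 − c e^{−μt}, t ≥ 0, since (1 − c)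 + ∫₀^∞ e^{−st} c μ e^{−μt} dt = 1 − c·s/(s + μ). -/
open MeasureTheory Real Filter Set

lemma mginf_aux_integral_exp (b : ℝ) (hb : 0 < b) :
    ∫ t in Ioi (0:ℝ), exp (-(b * t)) = 1 / b := by
  have h := integral_comp_mul_left_Ioi (fun x => exp (-x)) 0 hb
  simp only [mul_zero, smul_eq_mul] at h
  rw [h, integral_exp_neg_Ioi_zero]
  ring

lemma mginf_aux_integrable (b : ℝ) (hb : 0 < b) :
    IntegrableOn (fun t => exp (-(b * t))) (Ioi (0:ℝ)) := by
  simpa [neg_mul] using exp_neg_integrableOn_Ioi 0 hb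

/-- For the constant-β service family, the busy period Laplace transform is
`B̄(s) = 1 − cs/(s+μ)` with `c = (λ+β)(1−e^{−ρ})/λ`, `μ = e^{−ρ}(λ+β)`, which is
the Laplace–Stieltjes transform of `B^β(t) = 1 − ce^{−μt}`. -/
theorem mginf_constant_beta_busy_period_transform
    (lam ρ β : ℝ) (hlam : 0 < lam) (hρ : 0 < ρ)
    (hβ1 : -lam < β) (hβ2 : β ≤ lam / (exp ρ - 1))
    (Gβ : ℝ → ℝ)
    (hGβ : ∀ t, Gβ t = 1 - ((1 - exp (-ρ)) * (lam + β)) /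
        (lam * exp (-ρ) * (exp ((lam + β) * t) - 1) + lam))
    (M : ℝ → ℝ) (hM : ∀ t, M t = ∫ v in (0:ℝ)..t, (1 - Gβ v))
    (D Bbar : ℝ → ℝ)
    (hD : ∀ s, D s = ∫ t in Ioi (0:ℝ), exp (-s * t - lam * M t))
    (hBbar : ∀ s, Bbar s = 1 + lam⁻¹ * (s - 1 / D s))
    (c μ : ℝ) (hc : c = (lam + β) * (1 - exp (-ρ)) / lam)
    (hμ : μ = exp (-ρ) * (lam + β)) :
    ∀ s > (0:ℝ),
      Bbar s = 1 - c * s / (s + μ) ∧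
      (1 - c) + (∫ t in Ioi (0:ℝ), exp (-s * t) * (c * μ * exp (-μ * t)))
        = 1 - c * s / (s + μ) := by
  set a := lam + β with ha_def
  set q := exp (-ρ) with hq_def
  have ha : 0 < a := by simp only [ha_def]; linarith
  have hq0 : 0 < q := exp_pos _
  have hq1 : q < 1 := by
    calc q = exp (-ρ) := rfl
    _ < exp 0 := exp_lt_exp.mpr (by linarith)
    _ = 1 := exp_zero
  have hμ' : μ = q * a := by rw [hμ]
  have hμpos : 0 < μ := by rw [hμ']; positivity
  -- denominator positivity
  have hden : ∀ t : ℝ, 0 < q * exp (a * t) + (1 - q) := fun t => by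
    have := exp_pos (a * t); nlinarith
  -- rewrite 1 - Gβ
  have hG' : ∀ t : ℝ, 1 - Gβ t = (1 - q) * a / (lam * (q * exp (a * t) + (1 - q))) := by
    intro t
    rw [hGβ t]
    have : lam * q * (exp (a * t) - 1) + lam = lam * (q * exp (a * t) + (1 - q)) := by ring
    rw [show lam * exp (-ρ) * (exp ((lam + β) * t) - 1) + lam
        = lam * (q * exp (a * t) + (1 - q)) from by rw [← hq_def, ← ha_def]; ring]
    ring
  -- antiderivative
  set F : ℝ → ℝ := fun t => (a * t - Real.log (q * exp (a * t) + (1 - q))) / lam with hF_def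
  have hFderiv : ∀ t : ℝ, HasDerivAt F (1 - Gβ t) t := by
    intro t
    have h1 : HasDerivAt (fun t : ℝ => a * t) a t := by
      simpa using (hasDerivAt_id t).const_mul a
    have h2 : HasDerivAt (fun t : ℝ => q * exp (a * t) + (1 - q))
        (q * (exp (a * t) * a)) t := by
      have := (((hasDerivAt_id t).const_mul a).exp.const_mul q).add_const (1 - q)
      simpa using this
    have h3 : HasDerivAt (fun t : ℝ => Real.log (q * exp (a * t) + (1 - q)))
        (q * (exp (a * t) * a) / (q * exp (a * t) + (1 - q))) t :=
      h2.log (hden t).ne'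
    have h4 := (h1.sub h3).div_const lam
    have heq : (a - q * (exp (a * t) * a) / (q * exp (a * t) + (1 - q))) / lam
        = 1 - Gβ t := by
      rw [hG' t]
      have hu : q * exp (a * t) + (1 - q) ≠ 0 := (hden t).ne'
      have hl : lam ≠ 0 := hlam.ne'
      field_simp
      ring
    rw [← heq]
    exact h4
  -- M = F
  have hcont : Continuous (fun v : ℝ => 1 - Gβ v) := by
    have : (fun v : ℝ => 1 - Gβ v)
        = fun v => (1 - q) * a / (lam * (q * exp (a * v) + (1 - q))) := funext hG'
    rw [this]
    apply Continuous.div continuous_const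
    · continuity
    · intro t
      exact (mul_pos hlam (hden t)).ne'
  have hMF : ∀ t : ℝ, M t = F t := by
    intro t
    rw [hM t, intervalIntegral.integral_eq_sub_of_hasDerivAt
      (fun x _ => hFderiv x) (hcont.intervalIntegrable 0 t)]
    have : F 0 = 0 := by
      simp [hF_def]
    rw [this, sub_zero]
  intro s hs
  -- integrand simplification
  have hkey : ∀ t : ℝ, exp (-s * t - lam * M t)
      = q * exp (-(s * t)) + (1 - q) * exp (-((s + a) * t)) := by
    intro t
    rw [hMF t]
    have hu := hden t
    have hlamF : lam * F t = a * t - Real.log (q * exp (a * t) + (1 - q)) := by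
      rw [hF_def]; field_simp
    rw [show -s * t - lam * F t
        = Real.log (q * exp (a * t) + (1 - q)) + (-(s * t) - a * t) from by
          rw [hlamF]; ring,
      exp_add, exp_log hu]
    have e1 : exp (a * t) * exp (-(s * t) - a * t) = exp (-(s * t)) := by
      rw [← exp_add]; congr 1; ring
    have e2 : exp (-(s * t) - a * t) = exp (-((s + a) * t)) := by congr 1; ring
    calc (q * exp (a * t) + (1 - q)) * exp (-(s * t) - a * t)
        = q * (exp (a * t) * exp (-(s * t) - a * t))
          + (1 - q) * exp (-(s * t) - a * t) := by ring
      _ = q * exp (-(s * t)) + (1 - q) * exp (-((s + a) * t)) := by rw [e1, e2]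
  have hsa : 0 < s + a := by linarith
  -- compute D s
  have hDs : D s = q / s + (1 - q) / (s + a) := by
    rw [hD s]
    rw [show (fun t => exp (-s * t - lam * M t))
        = fun t => q * exp (-(s * t)) + (1 - q) * exp (-((s + a) * t)) from
          funext hkey]
    rw [integral_add ((mginf_aux_integrable s hs).const_mul q)
        ((mginf_aux_integrable (s + a) hsa).const_mul (1 - q)),
      integral_const_mul, integral_const_mul,
      mginf_aux_integral_exp s hs, mginf_aux_integral_exp (s + a) hsa]
    ring
  have hDpos : 0 < D s := by
    rw [hDs]
    exact add_pos (div_pos hq0 hs) (div_pos (by linarith) hsa)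
  have hsμ : 0 < s + μ := by linarith
  constructor
  · rw [hBbar s, hDs, hc, hμ]
    have h1 : q / s + (1 - q) / (s + a) ≠ 0 := by rw [← hDs]; exact hDpos.ne'
    have h2 : s ≠ 0 := hs.ne'
    have h3 : s + a ≠ 0 := hsa.ne'
    have h4 : lam ≠ 0 := hlam.ne'
    have h5 : s + q * a ≠ 0 := by rw [← hμ']; exact hsμ.ne'
    have hsum : q / s + (1 - q) / (s + a) = (s + q * a) / (s * (s + a)) := by
      rw [div_add_div _ _ h2 h3]
      congr 1
      ring
    rw [hsum, one_div_div]
    rw [show s - s * (s + a) / (s + q * a) = -(a * (1 - q) * s) / (s + q * a) from by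
      rw [eq_div_iff h5, sub_mul, div_mul_cancel₀ _ h5]; ring]
    ring
  · have e3 : (fun t => exp (-s * t) * (c * μ * exp (-μ * t)))
        = fun t => (c * μ) * exp (-((s + μ) * t)) := by
      funext t
      rw [mul_comm (exp (-s * t)), mul_assoc, ← exp_add]
      congr 2
      ring
    rw [e3, integral_const_mul, mginf_aux_integral_exp (s + μ) hsμ]
    have h6 : s + μ ≠ 0 := hsμ.ne'
    field_simp
    ring
end

section
/- Let λ > 0, ρ > 0, −λ < β ≤ λ/(e^{ρ} − 1), c = (λ+β)(1 − e^{−ρ})/λ, μ = e^{−ρ}(λ+β) and B^β(t) = 1 − c e^{−μt} for t ≥ 0. Then the mean of B^β is ∫₀^∞ (1 − B^β(t)) dt = (e^{ρ} − 1)/λ, independently of the parameter β. -/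
open MeasureTheory Real Filter Set
open scoped Topology

lemma integral_exp_neg_mul_Ioi_zero {b : ℝ} (hb : 0 < b) :
    ∫ x in Ioi (0:ℝ), exp (-b * x) = 1 / b := by
  have h : Tendsto (fun x => -exp (-b * x) / b) atTop (𝓝 (-0 / b)) := by
    refine Tendsto.div_const (Tendsto.neg ?_) _
    exact tendsto_exp_atBot.comp (tendsto_id.const_mul_atTop_of_neg (neg_neg_iff_pos.2 hb))
  have := integral_Ioi_of_hasDerivAt_of_tendsto' (f := fun x => -exp (-b * x) / b)
    (f' := fun x => exp (-b * x)) (a := 0) (m := -0 / b)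
    (fun x _ => by simpa [hb.ne'] using
      ((hasDerivAt_id x).const_mul b).neg.exp.neg.div_const b)
    (exp_neg_integrableOn_Ioi 0 hb) h
  rw [this]
  field_simp
  simp

/-- The mean of the busy period distribution `B^β(t) = 1 − ce^{−μt}` is
`(e^ρ − 1)/λ`, independently of `β`. -/
theorem mginf_constant_beta_busy_period_mean
    (lam ρ β : ℝ) (hlam : 0 < lam) (hρ : 0 < ρ)
    (hβ1 : -lam < β) (hβ2 : β ≤ lam / (exp ρ - 1))
    (c μ : ℝ) (hc : c = (lam + β) * (1 - exp (-ρ)) / lam)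
    (hμ : μ = exp (-ρ) * (lam + β))
    (B : ℝ → ℝ) (hB : ∀ t, B t = 1 - c * exp (-μ * t)) :
    (∫ t in Ioi (0:ℝ), (1 - B t)) = (exp ρ - 1) / lam := by
  have hsum : 0 < lam + β := by linarith
  have hμpos : 0 < μ := by
    rw [hμ]; exact mul_pos (exp_pos _) hsum
  have h1 : ∀ t, 1 - B t = c * exp (-μ * t) := by intro t; rw [hB t]; ring
  simp_rw [h1]
  rw [integral_const_mul, integral_exp_neg_mul_Ioi_zero hμpos]
  rw [hc, hμ]
  have h2 : exp (-ρ) ≠ 0 := (exp_pos _).ne'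
  have h3 : exp (-ρ) = (exp ρ)⁻¹ := exp_neg ρ
  have h4 : exp ρ ≠ 0 := (exp_pos _).ne'
  field_simp [hsum.ne']
  rw [h3]
  field_simp
end

section
/- Let λ > 0 and let G : ℝ → ℝ be measurable with 0 ≤ G(t) ≤ 1 for all t ≥ 0, M(t) = ∫₀ᵗ (1 − G(v)) dv, and define ψ(t) = λ(1 − G(t)) e^{−λM(t)}. Then for every t ≥ 0, 1 − ∫₀ᵗ ψ(v) dv = e^{−λM(t)} > 0 and 1 − G(t) = λ⁻¹ ψ(t) / (1 − ∫₀ᵗ ψ(v) dv); i.e., the service time tail 1 − G is recovered from ψ, the function whose Laplace transform is 1 − 1/(λ H̄(s) + 1) where H̄ is the busy period tail Laplace transform. -/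
open MeasureTheory Real Filter Set

lemma intOn_of_bdd {f : ℝ → ℝ} {s : Set ℝ} (hf : Measurable f) (hs : MeasurableSet s)
    (hμ : volume s ≠ ⊤) {C : ℝ} (hC : ∀ v ∈ s, |f v| ≤ C) : IntegrableOn f s := by
  refine Integrable.mono' (g := fun _ => C) (integrableOn_const hμ)
    (hf.aestronglyMeasurable) ?_
  exact (ae_restrict_iff' hs).2 (ae_of_all _ fun v hv => by simpa using hC v hv)

lemma swap_aux {t : ℝ} {f g : ℝ → ℝ} (hf : Measurable f) (hg : Measurable g)
    {Cf Cg : ℝ} (hCf : ∀ v ∈ Ioc (0:ℝ) t, |f v| ≤ Cf) (hCg : ∀ v ∈ Ioc (0:ℝ) t, |g v| ≤ Cg) :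
    ∫ v in Ioc (0:ℝ) t, f v * ∫ u in Ioc (0:ℝ) v, g u
      = ∫ u in Ioc (0:ℝ) t, g u * ∫ v in Ioc u t, f v := by
  rcases le_or_gt t 0 with h | ht
  · rw [Ioc_eq_empty (by exact not_lt.2 h)]; simp
  have hCf0 : 0 ≤ Cf := le_trans (abs_nonneg _) (hCf t ⟨ht, le_refl t⟩)
  have hCg0 : 0 ≤ Cg := le_trans (abs_nonneg _) (hCg t ⟨ht, le_refl t⟩)
  set μ := volume.restrict (Ioc (0:ℝ) t) with hμdef
  set k : ℝ → ℝ → ℝ := fun v u => if u ≤ v then f v * g u else 0 with hk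
  have hμfin : μ (Set.univ) ≠ ⊤ := by
    simp [hμdef, Measure.restrict_apply, Real.volume_Ioc]
  have hkint : Integrable (Function.uncurry k) (μ.prod μ) := by
    have hmeas : Measurable (Function.uncurry k) := by
      apply Measurable.ite (measurableSet_le measurable_snd measurable_fst)
      · exact (hf.comp measurable_fst).mul (hg.comp measurable_snd)
      · exact measurable_const
    refine Integrable.mono' (g := fun _ => Cf * Cg) ?_ hmeas.aestronglyMeasurable ?_
    · haveI : IsFiniteMeasure μ := ⟨lt_top_iff_ne_top.2 hμfin⟩
      exact integrable_const _
    · rw [hμdef, Measure.prod_restrict]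
      refine (ae_restrict_iff' (measurableSet_Ioc.prod measurableSet_Ioc)).2
        (ae_of_all _ fun p hp => ?_)
      rcases hp with ⟨hp1, hp2⟩
      simp only [Function.uncurry, hk]
      split_ifs with h
      · rw [Real.norm_eq_abs, abs_mul]
        exact mul_le_mul (hCf _ hp1) (hCg _ hp2) (abs_nonneg _) hCf0
      · simpa using mul_nonneg hCf0 hCg0
  have stepA : ∀ v ∈ Ioc (0:ℝ) t, f v * ∫ u in Ioc (0:ℝ) v, g u = ∫ u in Ioc (0:ℝ) t, k v u := by
    intro v hv
    have : ∀ u, k v u = (Iic v).indicator (fun u => f v * g u) u := by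
      intro u; simp only [hk, indicator]; by_cases h : u ≤ v <;> simp [h]
    simp_rw [this]
    rw [setIntegral_indicator measurableSet_Iic]
    have : Ioc (0:ℝ) t ∩ Iic v = Ioc 0 v := by
      rw [Ioc_inter_Iic, min_eq_right hv.2]
    rw [this, integral_const_mul]
  have stepB : ∀ u ∈ Ioc (0:ℝ) t, g u * ∫ v in Ioc u t, f v = ∫ v in Ioc (0:ℝ) t, k v u := by
    intro u hu
    have : ∀ v, k v u = (Ici u).indicator (fun v => f v * g u) v := by
      intro v; by_cases h : u ≤ v <;> simp [hk, indicator, h]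
    simp_rw [this]
    rw [setIntegral_indicator measurableSet_Ici]
    have : Ioc (0:ℝ) t ∩ Ici u = Icc u t := by
      ext v
      simp only [mem_inter_iff, mem_Ioc, mem_Ici, mem_Icc]
      constructor
      · rintro ⟨⟨_, h2⟩, h3⟩; exact ⟨h3, h2⟩
      · rintro ⟨h1, h2⟩; exact ⟨⟨lt_of_lt_of_le hu.1 h1, h2⟩, h1⟩
    rw [this, integral_Icc_eq_integral_Ioc, integral_mul_const]
    ring
  calc ∫ v in Ioc (0:ℝ) t, f v * ∫ u in Ioc (0:ℝ) v, g u
      = ∫ v, (∫ u, k v u ∂μ) ∂μ := setIntegral_congr_fun measurableSet_Ioc stepA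
    _ = ∫ u, (∫ v, k v u ∂μ) ∂μ := integral_integral_swap hkint
    _ = ∫ u in Ioc (0:ℝ) t, g u * ∫ v in Ioc u t, f v :=
        (setIntegral_congr_fun measurableSet_Ioc stepB).symm

section
variable {f : ℝ → ℝ}

variable (hf : Measurable f) (h0 : ∀ v, 0 ≤ f v) (h1 : ∀ v, f v ≤ 1)
include hf h0 h1

lemma f_abs_le : ∀ v, |f v| ≤ 1 := fun v => abs_le.2 ⟨by linarith [h0 v], h1 v⟩

lemma f_intInt : ∀ a b : ℝ, IntervalIntegrable f volume a b := by
  intro a b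
  rw [intervalIntegrable_iff]
  exact intOn_of_bdd hf measurableSet_uIoc (by simp [Set.uIoc, Real.volume_Ioc]) fun v _ => f_abs_le hf h0 h1 v

lemma F_cont : Continuous (fun x => ∫ u in (0:ℝ)..x, f u) :=
  intervalIntegral.continuous_primitive (f_intInt hf h0 h1) 0

lemma F_mono : Monotone (fun x => ∫ u in (0:ℝ)..x, f u) := by
  intro u v huv
  have := intervalIntegral.integral_add_adjacent_intervals (f_intInt hf h0 h1 0 u)
    (f_intInt hf h0 h1 u v)
  simp only []
  rw [← this]
  have : 0 ≤ ∫ x in u..v, f x := intervalIntegral.integral_nonneg huv fun x _ => h0 x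
  linarith

lemma F_nonneg : ∀ x, 0 ≤ x → 0 ≤ ∫ u in (0:ℝ)..x, f u := fun x hx =>
  intervalIntegral.integral_nonneg hx fun u _ => h0 u

lemma moment_aux (n : ℕ) :
    ∀ s, 0 ≤ s → ∫ v in Ioc (0:ℝ) s, f v * (∫ u in (0:ℝ)..v, f u) ^ n
      = (∫ u in (0:ℝ)..s, f u) ^ (n + 1) / (n + 1) := by
  set F : ℝ → ℝ := fun x => ∫ u in (0:ℝ)..x, f u with hF
  induction n with
  | zero =>
    intro s hs
    simp only [pow_zero, mul_one, pow_one, Nat.cast_zero, zero_add, div_one]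
    exact (intervalIntegral.integral_of_le hs).symm
  | succ n ih =>
    intro s hs
    -- integrability of φ := f * F^n and φ' := f * F^(n+1) on subintervals of [0,s]
    have hFmeas : Measurable F := (F_cont hf h0 h1).measurable
    have hφmeas : ∀ m : ℕ, Measurable fun v => f v * F v ^ m :=
      fun m => hf.mul (hFmeas.pow_const m)
    have hFle : ∀ m : ℕ, ∀ v ∈ Ioc (0:ℝ) s, |f v * F v ^ m| ≤ F s ^ m := by
      intro m v hv
      rw [abs_mul, abs_pow, abs_of_nonneg (F_nonneg hf h0 h1 v hv.1.le)]
      calc |f v| * F v ^ m ≤ 1 * F v ^ m := by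
            have := pow_nonneg (F_nonneg hf h0 h1 v hv.1.le) m
            exact mul_le_mul_of_nonneg_right (f_abs_le hf h0 h1 v) this
        _ = F v ^ m := one_mul _
        _ ≤ F s ^ m := pow_le_pow_left₀ (F_nonneg hf h0 h1 v hv.1.le)
            (F_mono hf h0 h1 hv.2) m
    have hφint : ∀ m : ℕ, ∀ a b : ℝ, 0 ≤ a → b ≤ s → a ≤ b →
        IntervalIntegrable (fun v => f v * F v ^ m) volume a b := by
      intro m a b ha hb hab
      rw [intervalIntegrable_iff]
      refine intOn_of_bdd (C := F s ^ m) (hφmeas m) measurableSet_uIoc (by simp [Set.uIoc, Real.volume_Ioc]) ?_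
      intro v hv
      rw [uIoc_of_le hab] at hv
      exact hFle m v ⟨lt_of_le_of_lt ha hv.1, hv.2.trans hb⟩
    -- rewrite integrand and swap
    have e1 : ∫ v in Ioc (0:ℝ) s, f v * F v ^ (n + 1)
        = ∫ v in Ioc (0:ℝ) s, (fun v => f v * F v ^ n) v * ∫ u in Ioc (0:ℝ) v, f u := by
      refine setIntegral_congr_fun measurableSet_Ioc fun v hv => ?_
      have : ∫ u in Ioc (0:ℝ) v, f u = F v := (intervalIntegral.integral_of_le hv.1.le).symm
      rw [this]; ring
    have e2 := swap_aux (f := fun v => f v * F v ^ n) (g := f) (t := s)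
      (hφmeas n) hf (hFle n) (fun v hv => f_abs_le hf h0 h1 v)
    -- inner integral evaluation
    have e3 : ∀ u ∈ Ioc (0:ℝ) s, f u * (∫ v in Ioc u s, f v * F v ^ n)
        = F s ^ (n + 1) / (n + 1) * f u - f u * F u ^ (n + 1) / (n + 1) := by
      intro u hu
      have hsplit := intervalIntegral.integral_add_adjacent_intervals
        (hφint n 0 u le_rfl hu.2 hu.1.le) (hφint n u s hu.1.le le_rfl hu.2)
      have : ∫ v in Ioc u s, f v * F v ^ n = (∫ v in (0:ℝ)..s, f v * F v ^ n)
          - ∫ v in (0:ℝ)..u, f v * F v ^ n := by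
        rw [← hsplit, intervalIntegral.integral_of_le hu.2]; ring
      rw [this, intervalIntegral.integral_of_le hs, intervalIntegral.integral_of_le hu.1.le,
        ih s hs, ih u hu.1.le]
      ring
    have hIf : ∫ u in Ioc (0:ℝ) s, f u = F s := (intervalIntegral.integral_of_le hs).symm
    have hint1 : IntegrableOn (fun u => F s ^ (n + 1) / (n + 1) * f u) (Ioc (0:ℝ) s) := by
      apply Integrable.const_mul
      exact intOn_of_bdd hf measurableSet_Ioc (by simp [Real.volume_Ioc])
        fun v _ => f_abs_le hf h0 h1 v
    have hint2 : IntegrableOn (fun u => f u * F u ^ (n + 1) / (n + 1)) (Ioc (0:ℝ) s) := by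
      apply Integrable.div_const
      exact (intervalIntegrable_iff_integrableOn_Ioc_of_le hs).1
        (hφint (n + 1) 0 s le_rfl le_rfl hs)
    have hEq : (∫ v in Ioc (0:ℝ) s, f v * F v ^ (n + 1))
        = F s ^ (n + 1) / (n + 1) * F s
          - (∫ u in Ioc (0:ℝ) s, f u * F u ^ (n + 1)) / (n + 1) := by
      conv_lhs => rw [e1, e2, setIntegral_congr_fun measurableSet_Ioc e3,
        integral_sub hint1 hint2, integral_const_mul, hIf, integral_div]
    set X := ∫ v in Ioc (0:ℝ) s, f v * F v ^ (n + 1) with hXdef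
    have hne : ((n:ℝ) + 1) ≠ 0 := by positivity
    have hne2 : ((n:ℝ) + 1 + 1) ≠ 0 := by positivity
    push_cast
    rw [eq_div_iff hne2]
    have hp : F s ^ (n + 1) * F s = F s ^ (n + 1 + 1) := (pow_succ _ _).symm
    field_simp at hEq
    linarith [hEq]
end

/-- Lemma 3.1 (time-domain form): with `ψ(t) = λ(1 − G(t))e^{−λM(t)}` one has
`1 − ∫₀ᵗ ψ = e^{−λM(t)} > 0` and the service tail is recovered as
`1 − G(t) = λ⁻¹ ψ(t)/(1 − ∫₀ᵗ ψ)`. -/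
theorem mginf_service_tail_recovery
    (lam : ℝ) (hlam : 0 < lam) (G : ℝ → ℝ) (hGmeas : Measurable G)
    (hG : ∀ t ≥ (0:ℝ), 0 ≤ G t ∧ G t ≤ 1)
    (M : ℝ → ℝ) (hM : ∀ t, M t = ∫ v in (0:ℝ)..t, (1 - G v))
    (ψ : ℝ → ℝ) (hψ : ∀ t, ψ t = lam * (1 - G t) * exp (-lam * M t)) :
    ∀ t ≥ (0:ℝ),
      (1 - ∫ v in (0:ℝ)..t, ψ v) = exp (-lam * M t) ∧
      0 < 1 - ∫ v in (0:ℝ)..t, ψ v ∧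
      1 - G t = lam⁻¹ * ψ t / (1 - ∫ v in (0:ℝ)..t, ψ v) := by
  intro t ht
  set f : ℝ → ℝ := fun v => if 0 ≤ v then 1 - G v else 0 with hfdef
  have hfmeas : Measurable f :=
    Measurable.ite measurableSet_Ici (measurable_const.sub hGmeas) measurable_const
  have h0 : ∀ v, 0 ≤ f v := by
    intro v
    by_cases h : 0 ≤ v
    · simp only [hfdef, if_pos h]; linarith [(hG v h).2]
    · simp [hfdef, h]
  have h1 : ∀ v, f v ≤ 1 := by
    intro v
    by_cases h : 0 ≤ v
    · simp only [hfdef, if_pos h]; linarith [(hG v h).1]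
    · simp [hfdef, h]
  set F : ℝ → ℝ := fun x => ∫ u in (0:ℝ)..x, f u with hFdef
  have hMF : ∀ v, 0 ≤ v → M v = F v := by
    intro v hv
    rw [hM v]
    refine intervalIntegral.integral_congr fun u hu => ?_
    rw [uIcc_of_le hv] at hu
    simp [hfdef, hu.1]
  set m := F t with hm
  have hm0 : 0 ≤ m := F_nonneg hfmeas h0 h1 t ht
  have hexp : ∀ x : ℝ, exp x = ∑' n : ℕ, x ^ n / (Nat.factorial n : ℝ) := by
    intro x
    rw [Real.exp_eq_exp_ℝ, NormedSpace.exp_eq_tsum_div]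
  set S : ℕ → ℝ → ℝ := fun n v => lam * f v * ((-lam * F v) ^ n / (Nat.factorial n : ℝ)) with hSdef
  have hψf : ∀ v ∈ Ioc (0:ℝ) t, ψ v = lam * f v * exp (-lam * F v) := by
    intro v hv
    rw [hψ v, hMF v hv.1.le]
    simp [hfdef, hv.1.le]
  have hstep1 : ∫ v in Ioc (0:ℝ) t, ψ v = ∫ v in Ioc (0:ℝ) t, (∑' n, S n v) := by
    refine setIntegral_congr_fun measurableSet_Ioc fun v hv => ?_
    rw [hψf v hv, hexp]
    rw [← tsum_mul_left]
  have hSbd : ∀ n, ∀ v ∈ Ioc (0:ℝ) t, |S n v| ≤ lam * ((lam * m) ^ n / (Nat.factorial n : ℝ)) := by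
    intro n v hv
    have hFv0 : 0 ≤ F v := F_nonneg hfmeas h0 h1 v hv.1.le
    have hFvm : F v ≤ m := F_mono hfmeas h0 h1 hv.2
    have hfa : |f v| ≤ 1 := f_abs_le hfmeas h0 h1 v
    have h1' : (lam * F v) ^ n ≤ (lam * m) ^ n :=
      pow_le_pow_left₀ (by positivity) (by nlinarith) n
    have habs : |S n v| = lam * |f v| * ((lam * F v) ^ n / (Nat.factorial n : ℝ)) := by
      rw [hSdef]
      rw [abs_mul, abs_mul, abs_of_pos hlam, abs_div, abs_pow, abs_mul, abs_neg,
        abs_of_pos hlam, abs_of_nonneg hFv0, Nat.abs_cast]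
    rw [habs]
    calc lam * |f v| * ((lam * F v) ^ n / (Nat.factorial n : ℝ))
        ≤ lam * 1 * ((lam * m) ^ n / (Nat.factorial n : ℝ)) := by gcongr
      _ = lam * ((lam * m) ^ n / (Nat.factorial n : ℝ)) := by ring
  have hSint : ∀ n, IntegrableOn (S n) (Ioc (0:ℝ) t) := by
    intro n
    refine intOn_of_bdd (C := lam * ((lam * m) ^ n / (Nat.factorial n : ℝ))) ?_ measurableSet_Ioc
      (by simp [Real.volume_Ioc]) (hSbd n)
    exact ((measurable_const.mul hfmeas).mul
      ((((measurable_const.mul (F_cont hfmeas h0 h1).measurable)).pow_const n).div_const _))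
  have hSsum : Summable fun n => ∫ v in Ioc (0:ℝ) t, ‖S n v‖ := by
    refine Summable.of_nonneg_of_le (fun n => integral_nonneg fun v => norm_nonneg _)
      (fun n => ?_)
      (((Real.summable_pow_div_factorial (lam * m)).mul_left lam).mul_right t)
    have hle : ∫ v in Ioc (0:ℝ) t, ‖S n v‖
        ≤ ∫ _v in Ioc (0:ℝ) t, (lam * ((lam * m) ^ n / (Nat.factorial n : ℝ))) := by
      refine setIntegral_mono_on (hSint n).norm
        (integrableOn_const (by simp [Real.volume_Ioc])) measurableSet_Ioc ?_
      intro v hv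
      rw [Real.norm_eq_abs]
      exact hSbd n v hv
    rw [setIntegral_const] at hle
    rw [measureReal_def, Real.volume_Ioc, smul_eq_mul, ENNReal.toReal_ofReal (by linarith)] at hle
    calc ∫ v in Ioc (0:ℝ) t, ‖S n v‖ ≤ (t - 0) * (lam * ((lam * m) ^ n / (Nat.factorial n : ℝ))) := hle
      _ = lam * ((lam * m) ^ n / (Nat.factorial n : ℝ)) * t := by ring
  have hswap : ∑' n, ∫ v in Ioc (0:ℝ) t, S n v = ∫ v in Ioc (0:ℝ) t, (∑' n, S n v) :=
    integral_tsum_of_summable_integral_norm hSint hSsum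
  have hSval : ∀ n, ∫ v in Ioc (0:ℝ) t, S n v = -((-lam * m) ^ (n + 1) / (Nat.factorial (n + 1) : ℝ)) := by
    intro n
    have hrw : ∀ v, S n v = (lam * ((-lam) ^ n / (Nat.factorial n : ℝ))) * (f v * F v ^ n) := by
      intro v
      rw [hSdef]
      simp only [mul_pow]
      ring
    simp_rw [hrw]
    rw [integral_const_mul, moment_aux hfmeas h0 h1 n t ht]
    rw [Nat.factorial_succ, mul_pow]
    have hfact : ((Nat.factorial n : ℝ)) ≠ 0 := Nat.cast_ne_zero.2 (Nat.factorial_ne_zero n)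
    push_cast
    field_simp
    ring
  have hshift : ∑' n : ℕ, ((-lam * m) ^ (n + 1) / (Nat.factorial (n + 1) : ℝ)) = exp (-lam * m) - 1 := by
    have hsum2 : Summable fun n : ℕ => ((-lam * m)) ^ n / (Nat.factorial n : ℝ) :=
      Real.summable_pow_div_factorial _
    have h := Summable.tsum_eq_zero_add hsum2
    rw [← hexp] at h
    simp only [pow_zero, Nat.factorial_zero, Nat.cast_one] at h
    have : (1:ℝ)/1 = 1 := by norm_num
    rw [this] at h
    linarith [h]
  have key : ∫ v in Ioc (0:ℝ) t, ψ v = 1 - exp (-lam * m) := by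
    rw [hstep1, ← hswap]
    simp_rw [hSval]
    rw [tsum_neg, hshift]
    ring
  have hint : ∫ v in (0:ℝ)..t, ψ v = 1 - exp (-lam * m) := by
    rw [intervalIntegral.integral_of_le ht, key]
  have hMt : M t = m := hMF t ht
  have part1 : (1 - ∫ v in (0:ℝ)..t, ψ v) = exp (-lam * M t) := by
    rw [hint, hMt]; ring
  refine ⟨part1, ?_, ?_⟩
  · rw [part1]; exact exp_pos _
  · rw [part1, hψ t]
    have hE : exp (-lam * M t) ≠ 0 := Real.exp_ne_zero _
    field_simp
end

section
/- Let J ≥ 1, let P be a J × J real matrix with nonnegative entries and row sums at most 1, let λ₁, …, λ_J ≥ 0 with λ = ∑ⱼ λⱼ > 0, let g₁, …, g_J ∈ [0, 1), let Λ(s)ᵀ = (λ₁g₁, …, λ_Jg_J), P(s)_{jl} = p_{jl} g_l, and A the column vector of J ones. Then the global service time Laplace transform Ḡ(s) = λ⁻¹ Λ(s)ᵀ (I − P(s))⁻¹ (I − P) A satisfies 0 ≤ Ḡ(s) ≤ 1. -/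
open Matrix Finset NNReal

section NetworkAux

attribute [local instance] Matrix.linftyOpNormedRing

private lemma matrix_pow_entry_nonneg {J : ℕ} {M : Matrix (Fin J) (Fin J) ℝ}
    (h : ∀ i j, 0 ≤ M i j) : ∀ (n : ℕ) (i j : Fin J), 0 ≤ (M ^ n) i j := by
  intro n
  induction n with
  | zero =>
    intro i j
    rw [pow_zero]
    by_cases hij : i = j <;> simp [Matrix.one_apply, hij]
  | succ n ih =>
    intro i j
    rw [pow_succ, Matrix.mul_apply]
    exact Finset.sum_nonneg fun k _ => mul_nonneg (ih i k) (h k j)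

private lemma matrix_entry_continuous {J : ℕ} (i j : Fin J) :
    Continuous fun M : Matrix (Fin J) (Fin J) ℝ => M i j := by
  refine AddMonoidHomClass.continuous_of_bound
    (AddMonoidHom.mk' (fun M : Matrix (Fin J) (Fin J) ℝ => M i j) fun a b => rfl) 1 fun M => ?_
  rw [one_mul]
  have h2 : ∑ l, ‖M i l‖₊ ≤ ‖M‖₊ := by
    rw [Matrix.linfty_opNNNorm_def]
    exact Finset.le_sup (f := fun i => ∑ l, ‖M i l‖₊) (Finset.mem_univ i)
  have h3 : ‖M i j‖₊ ≤ ∑ l, ‖M i l‖₊ :=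
    Finset.single_le_sum (f := fun l => ‖M i l‖₊) (fun l _ => zero_le) (Finset.mem_univ j)
  exact_mod_cast h3.trans h2

/-- The global service time Laplace transform of the open network,
`Ḡ(s) = λ⁻¹ Λ(s)ᵀ (I − P(s))⁻¹ (I − P) A`, lies in `[0, 1]`. -/
theorem network_global_transform_in_unit_interval
    (J : ℕ) (hJ : 1 ≤ J) (P : Matrix (Fin J) (Fin J) ℝ)
    (hPnn : ∀ j l, 0 ≤ P j l) (hProw : ∀ j, ∑ l, P j l ≤ 1)
    (lamv : Fin J → ℝ) (hlamv : ∀ j, 0 ≤ lamv j)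
    (lam : ℝ) (hlam : lam = ∑ j, lamv j) (hlampos : 0 < lam)
    (g : Fin J → ℝ) (hg : ∀ j, g j ∈ Set.Ico (0:ℝ) 1)
    (Ps : Matrix (Fin J) (Fin J) ℝ) (hPs : ∀ j l, Ps j l = P j l * g l)
    (Λs : Fin J → ℝ) (hΛs : ∀ j, Λs j = lamv j * g j)
    (A : Fin J → ℝ) (hA : ∀ j, A j = 1) :
    0 ≤ lam⁻¹ * (Λs ⬝ᵥ (((1 - Ps)⁻¹ * (1 - P)) *ᵥ A)) ∧
    lam⁻¹ * (Λs ⬝ᵥ (((1 - Ps)⁻¹ * (1 - P)) *ᵥ A)) ≤ 1 := by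
  haveI : @CompleteSpace (Matrix (Fin J) (Fin J) ℝ) PseudoMetricSpace.toUniformSpace := by
    letI : NormedSpace ℝ (Matrix (Fin J) (Fin J) ℝ) := Matrix.linftyOpNormedSpace
    exact FiniteDimensional.complete ℝ _
  haveI hne : Nonempty (Fin J) := Fin.pos_iff_nonempty.mp hJ
  -- the max of g
  set c : ℝ := univ.sup' Finset.univ_nonempty g with hc
  have hgc : ∀ j, g j ≤ c := fun j => Finset.le_sup' g (mem_univ j)
  have hc0 : 0 ≤ c := le_trans (hg (Classical.arbitrary _)).1 (hgc _)
  have hc1 : c < 1 := (Finset.sup'_lt_iff Finset.univ_nonempty).mpr fun j _ => (hg j).2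
  have hPsnn : ∀ i j, 0 ≤ Ps i j := fun i j => by
    rw [hPs]; exact mul_nonneg (hPnn i j) (hg j).1
  -- norm bound
  have hnorm : ‖Ps‖ < 1 := by
    rw [Matrix.linfty_opNorm_def]
    have : (univ.sup fun i : Fin J => ∑ j, ‖Ps i j‖₊) < 1 := by
      refine Finset.sup_lt_iff (by norm_num) |>.mpr fun i _ => ?_
      rw [← NNReal.coe_lt_coe, NNReal.coe_sum, NNReal.coe_one]
      have : ∑ j, (‖Ps i j‖₊ : ℝ) = ∑ j, Ps i j := by
        refine Finset.sum_congr rfl fun j _ => ?_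
        rw [coe_nnnorm, Real.norm_eq_abs, abs_of_nonneg (hPsnn i j)]
      rw [this]
      calc ∑ j, Ps i j ≤ ∑ j, P i j * c := by
            refine Finset.sum_le_sum fun j _ => ?_
            rw [hPs]
            exact mul_le_mul_of_nonneg_left (hgc j) (hPnn i j)
        _ = (∑ j, P i j) * c := by rw [Finset.sum_mul]
        _ ≤ 1 * c := mul_le_mul_of_nonneg_right (hProw i) hc0
        _ = c := one_mul c
        _ < 1 := hc1
    exact_mod_cast this
  -- Neumann series
  set S : Matrix (Fin J) (Fin J) ℝ := ∑' n : ℕ, Ps ^ n with hSdef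
  have hsum : Summable fun n : ℕ => Ps ^ n := summable_geometric_of_norm_lt_one hnorm
  have hinv : (1 - Ps)⁻¹ = S := Matrix.inv_eq_right_inv (mul_neg_geom_series Ps hnorm)
  have hSnn : ∀ i j, 0 ≤ S i j := by
    intro i j
    have hmap : HasSum (fun n : ℕ => (Ps ^ n) i j) (S i j) :=
      hsum.hasSum.map
        (AddMonoidHom.mk' (fun M : Matrix (Fin J) (Fin J) ℝ => M i j) fun a b => rfl)
        (matrix_entry_continuous i j)
    exact hasSum_le (fun n => matrix_pow_entry_nonneg hPsnn n i j) hasSum_zero hmap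
  have hSv : ∀ v : Fin J → ℝ, (∀ j, 0 ≤ v j) → ∀ i, 0 ≤ (S *ᵥ v) i := by
    intro v hv i
    simp only [Matrix.mulVec, dotProduct]
    exact Finset.sum_nonneg fun j _ => mul_nonneg (hSnn i j) (hv j)
  set x : Fin J → ℝ := ((1 - Ps)⁻¹ * (1 - P)) *ᵥ A with hxdef
  have hxS : x = S *ᵥ ((1 - P) *ᵥ A) := by
    rw [hxdef, hinv, Matrix.mulVec_mulVec]
  -- x ≥ 0
  have hx0 : ∀ i, 0 ≤ x i := by
    rw [hxS]
    refine hSv _ fun j => ?_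
    have : ((1 - P) *ᵥ A) j = 1 - ∑ l, P j l := by
      simp [Matrix.sub_mulVec, Matrix.mulVec, dotProduct, hA, Matrix.one_apply,
        Finset.sum_ite_eq]
    rw [this]
    linarith [hProw j]
  -- x ≤ 1
  have hx1 : ∀ i, x i ≤ 1 := by
    have e1 : S *ᵥ ((1 - Ps) *ᵥ A) = A := by
      rw [Matrix.mulVec_mulVec, show S * (1 - Ps) = 1 from geom_series_mul_neg Ps hnorm, Matrix.one_mulVec]
    have e2 : A - x = S *ᵥ ((P - Ps) *ᵥ A) := by
      calc A - x = S *ᵥ ((1 - Ps) *ᵥ A) - S *ᵥ ((1 - P) *ᵥ A) := by rw [e1, hxS]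
        _ = S *ᵥ ((1 - Ps) *ᵥ A - (1 - P) *ᵥ A) := by rw [Matrix.mulVec_sub]
        _ = S *ᵥ (((1 - Ps) - (1 - P)) *ᵥ A) := by rw [← Matrix.sub_mulVec]
        _ = S *ᵥ ((P - Ps) *ᵥ A) := by rw [sub_sub_sub_cancel_left]
    intro i
    have h0 : 0 ≤ (A - x) i := by
      rw [e2]
      refine hSv _ (fun j => ?_) i
      simp only [Matrix.mulVec, dotProduct, Matrix.sub_apply]
      refine Finset.sum_nonneg fun l _ => ?_
      rw [hA, hPs]
      nlinarith [hPnn j l, (hg l).1, (hg l).2]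
    have := h0
    simp only [Pi.sub_apply, hA] at this
    linarith
  -- conclude
  have hdot0 : 0 ≤ Λs ⬝ᵥ x := by
    refine Finset.sum_nonneg fun j _ => ?_
    rw [hΛs]
    exact mul_nonneg (mul_nonneg (hlamv j) (hg j).1) (hx0 j)
  have hdotle : Λs ⬝ᵥ x ≤ lam := by
    rw [hlam]
    refine Finset.sum_le_sum fun j _ => ?_
    rw [hΛs]
    calc lamv j * g j * x j ≤ lamv j * g j :=
          mul_le_of_le_one_right (mul_nonneg (hlamv j) (hg j).1) (hx1 j)
      _ ≤ lamv j := mul_le_of_le_one_right (hlamv j) (hg j).2.le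
  constructor
  · exact mul_nonneg (inv_nonneg.mpr hlampos.le) hdot0
  · rw [inv_mul_eq_div, div_le_one hlampos]
    exact hdotle

end NetworkAux
end
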